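/- arXiv:1309.6021 — 6 statements merged into one kernel-verified Lean document; each statement's English description precedes it below -/
import Mathlib

section
/- For every integer m ≥ 2, every positive integer n can be written uniquely in the form n = s·q·k, where s is squarefree, q ∈ Q_m, k is a perfect m-th power, and gcd(q,s) = 1; moreover, for this representation one has τ(n) ≡ τ(s)·τ(q) (mod m). -/
/-- Number of divisors of `n`. -/
noncomputable def tdiv (n : ℕ) : ℕ := n.divisors.card

/-- `q ∈ Q_m`: every prime exactly dividing `q` does so with exponent in `[2, m-1]`. -/
def memQ (m q : ℕ) : Prop :=
  0 < q ∧ ∀ p : ℕ, p.Prime → p ∣ q → 2 ≤ q.factorization p ∧ q.factorization p ≤ m - 1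

private lemma fact_prod_pow (S : Finset ℕ) (hS : ∀ p ∈ S, p.Prime) (f : ℕ → ℕ) (p : ℕ) :
    (∏ q ∈ S, q ^ f q).factorization p = if p ∈ S then f p else 0 := by
  rw [Nat.factorization_prod (fun q hq => pow_ne_zero _ (hS q hq).pos.ne')]
  rw [Finset.sum_apply']
  rw [Finset.sum_congr rfl (fun q hq => by
    rw [(hS q hq).factorization_pow, Finsupp.single_apply])]
  exact Finset.sum_ite_eq' S p f

/-- squarefree part -/
private def Sp (m n : ℕ) : ℕ :=
  ∏ p ∈ n.primeFactors, p ^ (if n.factorization p % m = 1 then 1 else 0)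

/-- Q part -/
private def Qp (m n : ℕ) : ℕ :=
  ∏ p ∈ n.primeFactors, p ^ (if 2 ≤ n.factorization p % m then n.factorization p % m else 0)

/-- m-th root of the power part -/
private def Jp (m n : ℕ) : ℕ :=
  ∏ p ∈ n.primeFactors, p ^ (n.factorization p / m)

private lemma Sp_pos (m n : ℕ) : 0 < Sp m n :=
  Finset.prod_pos fun p hp => pow_pos (Nat.prime_of_mem_primeFactors hp).pos _

private lemma Qp_pos (m n : ℕ) : 0 < Qp m n :=
  Finset.prod_pos fun p hp => pow_pos (Nat.prime_of_mem_primeFactors hp).pos _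

private lemma Jp_pos (m n : ℕ) : 0 < Jp m n :=
  Finset.prod_pos fun p hp => pow_pos (Nat.prime_of_mem_primeFactors hp).pos _

private lemma Sp_fact (m n p : ℕ) :
    (Sp m n).factorization p = if n.factorization p % m = 1 then 1 else 0 := by
  rw [Sp, fact_prod_pow _ (fun q hq => Nat.prime_of_mem_primeFactors hq)]
  by_cases h : p ∈ n.primeFactors
  · simp [h]
  · have h0 : n.factorization p = 0 := by
      by_contra h0
      exact h ((Nat.support_factorization n) ▸ Finsupp.mem_support_iff.mpr h0)
    simp [h, h0]

private lemma Qp_fact (m n p : ℕ) :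
    (Qp m n).factorization p =
      if 2 ≤ n.factorization p % m then n.factorization p % m else 0 := by
  rw [Qp, fact_prod_pow _ (fun q hq => Nat.prime_of_mem_primeFactors hq)]
  by_cases h : p ∈ n.primeFactors
  · simp [h]
  · have h0 : n.factorization p = 0 := by
      by_contra h0
      exact h ((Nat.support_factorization n) ▸ Finsupp.mem_support_iff.mpr h0)
    simp [h, h0]

private lemma Jp_fact (m n p : ℕ) :
    (Jp m n).factorization p = n.factorization p / m := by
  rw [Jp, fact_prod_pow _ (fun q hq => Nat.prime_of_mem_primeFactors hq)]
  by_cases h : p ∈ n.primeFactors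
  · simp [h]
  · have h0 : n.factorization p = 0 := by
      by_contra h0
      exact h ((Nat.support_factorization n) ▸ Finsupp.mem_support_iff.mpr h0)
    simp [h, h0]

private lemma Sp_squarefree (m n : ℕ) : Squarefree (Sp m n) := by
  rw [Nat.squarefree_iff_factorization_le_one (Sp_pos m n).ne']
  intro p
  rw [Sp_fact]
  split_ifs <;> omega

private lemma Qp_memQ (m n : ℕ) (hm : 2 ≤ m) : memQ m (Qp m n) := by
  refine ⟨Qp_pos m n, fun p hp hdvd => ?_⟩
  have hpos : 0 < (Qp m n).factorization p :=
    Nat.Prime.factorization_pos_of_dvd hp (Qp_pos m n).ne' hdvd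
  rw [Qp_fact] at hpos ⊢
  have hlt : n.factorization p % m < m := Nat.mod_lt _ (by omega)
  split_ifs at hpos ⊢ <;> omega

private lemma Sp_Qp_coprime (m n : ℕ) : Nat.gcd (Qp m n) (Sp m n) = 1 := by
  by_contra h
  obtain ⟨p, hp, hpq, hps⟩ := Nat.Prime.not_coprime_iff_dvd.mp h
  have h1 : 0 < (Sp m n).factorization p :=
    Nat.Prime.factorization_pos_of_dvd hp (Sp_pos m n).ne' hps
  have h2 : 0 < (Qp m n).factorization p :=
    Nat.Prime.factorization_pos_of_dvd hp (Qp_pos m n).ne' hpq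
  rw [Sp_fact] at h1
  rw [Qp_fact] at h2
  split_ifs at h1 h2 <;> omega

private lemma decomp_eq (m n : ℕ) (hm : 2 ≤ m) (hn : 0 < n) :
    n = Sp m n * Qp m n * Jp m n ^ m := by
  have h0 : Sp m n * Qp m n * Jp m n ^ m ≠ 0 := by
    have := Sp_pos m n; have := Qp_pos m n; have := Jp_pos m n
    positivity
  refine Nat.factorization_inj (Set.mem_setOf.mpr hn.ne') (Set.mem_setOf.mpr h0) ?_
  ext p
  rw [Nat.factorization_mul (mul_ne_zero (Sp_pos m n).ne' (Qp_pos m n).ne')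
      (pow_ne_zero _ (Jp_pos m n).ne'),
    Nat.factorization_mul (Sp_pos m n).ne' (Qp_pos m n).ne', Nat.factorization_pow]
  simp only [Finsupp.add_apply, Finsupp.smul_apply, smul_eq_mul]
  rw [Sp_fact, Qp_fact, Jp_fact]
  have := Nat.div_add_mod (n.factorization p) m
  have hlt : n.factorization p % m < m := Nat.mod_lt _ (by omega)
  split_ifs <;> omega

/-- Analysis of an arbitrary valid decomposition -/
private lemma analysis (m n s q j : ℕ) (hm : 2 ≤ m) (hn : 0 < n)
    (hs : Squarefree s) (hq : memQ m q) (hj : 0 < j)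
    (hco : Nat.gcd q s = 1) (heq : n = s * q * j ^ m) (p : ℕ) :
    s.factorization p = (if n.factorization p % m = 1 then 1 else 0) ∧
    q.factorization p = (if 2 ≤ n.factorization p % m then n.factorization p % m else 0) := by
  have hs0 : s ≠ 0 := hs.ne_zero
  have hq0 : q ≠ 0 := hq.1.ne'
  have hj0 : j ≠ 0 := hj.ne'
  have hfact : n.factorization p =
      s.factorization p + q.factorization p + m * j.factorization p := by
    rw [heq, Nat.factorization_mul (mul_ne_zero hs0 hq0) (pow_ne_zero _ hj0),
      Nat.factorization_mul hs0 hq0, Nat.factorization_pow]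
    simp [add_assoc]
  set fs := s.factorization p with hfs
  set fq := q.factorization p with hfq
  have hfs1 : fs ≤ 1 := (Nat.squarefree_iff_factorization_le_one hs0).mp hs p
  have hfqr : fq = 0 ∨ (2 ≤ fq ∧ fq ≤ m - 1) := by
    by_cases hd : p ∣ q
    · by_cases hp : p.Prime
      · exact Or.inr (hq.2 p hp hd)
      · exact Or.inl (Nat.factorization_eq_zero_of_not_prime q hp)
    · exact Or.inl (Nat.factorization_eq_zero_of_not_dvd hd)
  have hzero : fs = 0 ∨ fq = 0 := by
    by_contra h
    push_neg at h
    have hps : p ∣ s := Nat.dvd_of_factorization_pos h.1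
    have hpq : p ∣ q := Nat.dvd_of_factorization_pos h.2
    have hd : p ∣ Nat.gcd q s := Nat.dvd_gcd hpq hps
    rw [hco] at hd
    have hle := Nat.le_of_dvd one_pos hd
    have hp : p.Prime := by
      by_contra hp
      exact h.1 (Nat.factorization_eq_zero_of_not_prime s hp)
    have := hp.two_le
    omega
  have hmod : n.factorization p % m = fs + fq := by
    rw [hfact, Nat.add_mul_mod_self_left]
    exact Nat.mod_eq_of_lt (by omega)
  rw [hmod]
  constructor <;> · split_ifs <;> omega

private lemma decomp_unique (m n : ℕ) (hm : 2 ≤ m) (hn : 0 < n)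
    (s q k : ℕ) (hs : Squarefree s) (hq : memQ m q)
    (hk : ∃ j : ℕ, 0 < j ∧ k = j ^ m)
    (hco : Nat.gcd q s = 1) (heq : n = s * q * k) :
    s = Sp m n ∧ q = Qp m n ∧ k = Jp m n ^ m := by
  obtain ⟨j, hj, rfl⟩ := hk
  have hsS : s = Sp m n := by
    refine Nat.factorization_inj (Set.mem_setOf.mpr hs.ne_zero)
      (Set.mem_setOf.mpr (Sp_pos m n).ne') ?_
    ext p
    rw [Sp_fact]
    exact (analysis m n s q j hm hn hs hq hj hco heq p).1
  have hqQ : q = Qp m n := by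
    refine Nat.factorization_inj (Set.mem_setOf.mpr hq.1.ne')
      (Set.mem_setOf.mpr (Qp_pos m n).ne') ?_
    ext p
    rw [Qp_fact]
    exact (analysis m n s q j hm hn hs hq hj hco heq p).2
  refine ⟨hsS, hqQ, ?_⟩
  have h1 : s * q * (j ^ m) = s * q * (Jp m n ^ m) := by
    rw [← heq, hsS, hqQ, ← decomp_eq m n hm hn]
  exact Nat.eq_of_mul_eq_mul_left
    (mul_pos (hs.ne_zero.bot_lt) hq.1) h1

theorem stmt4 (m : ℕ) (hm : 2 ≤ m) (n : ℕ) (hn : 0 < n) :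
    (∃! w : ℕ × ℕ × ℕ,
      Squarefree w.1 ∧ memQ m w.2.1 ∧ (∃ j : ℕ, 0 < j ∧ w.2.2 = j ^ m) ∧
        Nat.gcd w.2.1 w.1 = 1 ∧ n = w.1 * w.2.1 * w.2.2) ∧
    (∀ s q k : ℕ, Squarefree s → memQ m q → (∃ j : ℕ, 0 < j ∧ k = j ^ m) →
      Nat.gcd q s = 1 → n = s * q * k → tdiv n ≡ tdiv s * tdiv q [MOD m]) := by
  constructor
  · refine ⟨(Sp m n, Qp m n, Jp m n ^ m),
      ⟨Sp_squarefree m n, Qp_memQ m n hm, ⟨Jp m n, Jp_pos m n, rfl⟩,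
        Sp_Qp_coprime m n, decomp_eq m n hm hn⟩, ?_⟩
    rintro ⟨s, q, k⟩ ⟨h1, h2, h3, h4, h5⟩
    obtain ⟨e1, e2, e3⟩ := decomp_unique m n hm hn s q k h1 h2 h3 h4 h5
    simp only [Prod.mk.injEq]
    exact ⟨e1, e2, e3⟩
  · intro s q k hs hq hk hco heq
    obtain ⟨j, hj, rfl⟩ := hk
    have hs0 : s ≠ 0 := hs.ne_zero
    have hq0 : q ≠ 0 := hq.1.ne'
    have hj0 : j ≠ 0 := hj.ne'
    have hfact : ∀ p, n.factorization p =
        s.factorization p + q.factorization p + m * j.factorization p := by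
      intro p
      rw [heq, Nat.factorization_mul (mul_ne_zero hs0 hq0) (pow_ne_zero _ hj0),
        Nat.factorization_mul hs0 hq0, Nat.factorization_pow]
      simp [add_assoc]
    have hzero : ∀ p, s.factorization p = 0 ∨ q.factorization p = 0 := by
      intro p
      by_contra h
      push_neg at h
      have hps : p ∣ s := Nat.dvd_of_factorization_pos h.1
      have hpq : p ∣ q := Nat.dvd_of_factorization_pos h.2
      have hd : p ∣ Nat.gcd q s := Nat.dvd_gcd hpq hps
      rw [hco] at hd
      have hle := Nat.le_of_dvd one_pos hd
      have hp : p.Prime := by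
        by_contra hp
        exact h.1 (Nat.factorization_eq_zero_of_not_prime s hp)
      have := hp.two_le
      omega
    rw [← ZMod.natCast_eq_natCast_iff]
    have hsub_s : s.primeFactors ⊆ n.primeFactors :=
      Nat.primeFactors_mono ⟨q * j ^ m, by rw [heq]; ring⟩ hn.ne'
    have hsub_q : q.primeFactors ⊆ n.primeFactors :=
      Nat.primeFactors_mono ⟨s * j ^ m, by rw [heq]; ring⟩ hn.ne'
    have hts : (tdiv s : ZMod m) =
        ∏ p ∈ n.primeFactors, ((s.factorization p + 1 : ℕ) : ZMod m) := by
      rw [tdiv, Nat.card_divisors hs0, Nat.cast_prod]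
      refine (Finset.prod_subset (f := fun p => ((s.factorization p + 1 : ℕ) : ZMod m)) hsub_s fun p _ hp => ?_)
      have h0 : s.factorization p = 0 := by
        by_contra h0
        exact hp ((Nat.support_factorization s) ▸ Finsupp.mem_support_iff.mpr h0)
      simp [h0]
    have htq : (tdiv q : ZMod m) =
        ∏ p ∈ n.primeFactors, ((q.factorization p + 1 : ℕ) : ZMod m) := by
      rw [tdiv, Nat.card_divisors hq0, Nat.cast_prod]
      refine (Finset.prod_subset (f := fun p => ((q.factorization p + 1 : ℕ) : ZMod m)) hsub_q fun p _ hp => ?_)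
      have h0 : q.factorization p = 0 := by
        by_contra h0
        exact hp ((Nat.support_factorization q) ▸ Finsupp.mem_support_iff.mpr h0)
      simp [h0]
    rw [Nat.cast_mul, hts, htq, ← Finset.prod_mul_distrib]
    rw [tdiv, Nat.card_divisors hn.ne', Nat.cast_prod]
    refine Finset.prod_congr rfl fun p _ => ?_
    have h1 : (s.factorization p + 1) * (q.factorization p + 1) =
        s.factorization p + q.factorization p + 1 := by
      rcases hzero p with h | h <;> rw [h] <;> ring
    rw [← Nat.cast_mul, h1, hfact p]
    push_cast
    simp [ZMod.natCast_self]
end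

section
/- There exists an absolute constant C > 0 such that for every squarefree integer q ≥ 2 and every real X ≥ 2, the number A_q(X) of positive integers n ≤ X all of whose prime factors divide q satisfies A_q(X) ≤ C·(1/ω(q)!)·(log X + 2·ω(q)^{1/2}·log q)^{ω(q)}. -/
/-!
Writing `n = ∏ p ^ e_p`, the integers counted by `A_q(X)` are the lattice points of the simplex
`∑ e_p log p ≤ log X`, and there are at most `(log X + ∑ log p) ^ k / (k! ∏ log p)` of them, the
volume of the simplex enlarged by one step in each direction. This goes by induction on the set
of primes: splitting off the exponent `a` of one prime `p` leaves a Riemann sum of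
`(log X - a log p + ∑_{p' ≠ p} log p') ^ (k - 1)`, which telescopes. For squarefree `q` we have
`∑ log p = log q`, and `∏ log p ≥ log 2` because 2 is the only prime below `e`.
-/

open scoped Classical in
/-- `A_q(X)`: the number of positive integers `n ≤ X` all of whose prime factors divide `q`. -/
noncomputable def Aq (q : ℕ) (X : ℝ) : ℕ :=
  ((Finset.Icc 1 ⌊X⌋₊).filter (fun n => ∀ p : ℕ, p.Prime → p ∣ n → p ∣ q)).card

open Finset Real

lemma mul_pow_mul_sub_le_pow_sub_pow {x y : ℝ} (hy : 0 ≤ y) (hyx : y ≤ x) (k : ℕ) :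
    (k + 1) * y ^ k * (x - y) ≤ x ^ (k + 1) - y ^ (k + 1) := by
  rw [← geom_sum₂_mul x y (k + 1)]
  refine mul_le_mul_of_nonneg_right ?_ (sub_nonneg.2 hyx)
  calc ((k : ℝ) + 1) * y ^ k = ∑ i ∈ range (k + 1), y ^ k := by simp
    _ ≤ ∑ i ∈ range (k + 1), x ^ i * y ^ (k + 1 - 1 - i) := by
        gcongr with i hi
        rw [Nat.add_sub_cancel, ← Nat.add_sub_cancel' (Nat.lt_succ_iff.mp (mem_range.mp hi)),
          pow_add, Nat.add_sub_cancel_left]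
        gcongr

lemma mul_sum_range_sub_pow_le {c t : ℝ} (ht : 0 ≤ t) {A : ℕ} (hA : A * t ≤ c) (k : ℕ) :
    (k + 1) * t * ∑ a ∈ range (A + 1), (c - a * t) ^ k ≤ (c + t) ^ (k + 1) := by
  set f : ℕ → ℝ := fun a => (c + t - a * t) ^ (k + 1)
  have hstep : ∀ a ∈ range (A + 1), (k + 1) * t * (c - a * t) ^ k ≤ f a - f (a + 1) := by
    intro a ha
    have hat : a * t ≤ c :=
      le_trans (by gcongr; exact_mod_cast Nat.lt_succ_iff.mp (mem_range.mp ha)) hA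
    have hgap := mul_pow_mul_sub_le_pow_sub_pow (x := c + t - a * t) (y := c - a * t)
      (by linarith) (by linarith) k
    calc (k + 1) * t * (c - a * t) ^ k
        = (k + 1) * (c - a * t) ^ k * (c + t - a * t - (c - a * t)) := by ring
      _ ≤ _ := hgap
      _ = f a - f (a + 1) := by simp only [f]; push_cast; ring
  have hlast : 0 ≤ f (A + 1) := pow_nonneg (by push_cast; linarith) _
  calc (k + 1) * t * ∑ a ∈ range (A + 1), (c - a * t) ^ k
      = ∑ a ∈ range (A + 1), (k + 1) * t * (c - a * t) ^ k := mul_sum _ _ _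
    _ ≤ ∑ a ∈ range (A + 1), (f a - f (a + 1)) := sum_le_sum hstep
    _ = f 0 - f (A + 1) := sum_range_sub' f (A + 1)
    _ ≤ (c + t) ^ (k + 1) := by simp only [f, Nat.cast_zero, zero_mul, sub_zero]; linarith

lemma log_natCast_div_add_log_le {N m : ℕ} (hm : m ≤ N) :
    log (N / m : ℕ) + log m ≤ log N := by
  rcases Nat.eq_zero_or_pos m with rfl | hm0
  · simpa using log_natCast_nonneg N
  rw [← log_mul (by exact_mod_cast (Nat.div_pos hm hm0).ne') (by exact_mod_cast hm0.ne')]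
  exact log_le_log (by exact_mod_cast Nat.mul_pos (Nat.div_pos hm hm0) hm0)
    (by exact_mod_cast Nat.div_mul_le_self N m)

def factoredNumbersUpTo (s : Finset ℕ) (N : ℕ) : Finset ℕ :=
  {n ∈ Icc 1 N | n.primeFactors ⊆ s}

lemma card_factoredNumbersUpTo_insert_le {p : ℕ} (hp : p.Prime) (s : Finset ℕ) (N : ℕ) :
    #(factoredNumbersUpTo (insert p s) N) ≤
      ∑ a ∈ range (Nat.log p N + 1), #(factoredNumbersUpTo s (N / p ^ a)) := by
  classical
  refine (card_le_card ?_).trans <| card_biUnion_le.trans <| sum_le_sum fun a _ =>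
    card_image_le (f := (p ^ a * ·))
  intro n hn
  simp only [factoredNumbersUpTo, mem_filter, mem_Icc] at hn
  obtain ⟨⟨hn1, hnN⟩, hns⟩ := hn
  have hn0 : n ≠ 0 := by omega
  have hsplit := Nat.ordProj_mul_ordCompl_eq_self n p
  set a := n.factorization p
  set m := n / p ^ a
  have ha : a ≤ Nat.log p N := Nat.le_log_of_pow_le hp.one_lt ((Nat.ordProj_le p hn0).trans hnN)
  have hm1 : 1 ≤ m := Nat.ordCompl_pos p hn0
  have hmN : m ≤ N / p ^ a :=
    (Nat.le_div_iff_mul_le (pow_pos hp.pos a)).2 (by rw [mul_comm, hsplit]; exact hnN)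
  have hms : m.primeFactors ⊆ s := by
    intro r hr
    have hrp : r ≠ p := by
      rintro rfl
      exact Nat.not_dvd_ordCompl hp hn0 (Nat.dvd_of_mem_primeFactors hr)
    exact (mem_insert.mp (hns (Nat.primeFactors_mono (Nat.ordCompl_dvd n p) hn0 hr))).resolve_left
      hrp
  simp only [mem_biUnion, mem_range, mem_image, factoredNumbersUpTo, mem_filter, mem_Icc]
  exact ⟨a, Nat.lt_succ_of_le ha, m, ⟨⟨hm1, hmN⟩, hms⟩, hsplit⟩

theorem card_factoredNumbersUpTo_mul_le {s : Finset ℕ} (hs : ∀ p ∈ s, p.Prime) (N : ℕ) :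
    #(factoredNumbersUpTo s N) * (#s).factorial * ∏ p ∈ s, log p ≤
      (log N + ∑ p ∈ s, log p) ^ #s := by
  induction s using Finset.induction_on generalizing N with
  | empty =>
    have hsub : factoredNumbersUpTo ∅ N ⊆ {1} := fun n hn => by
      simp only [factoredNumbersUpTo, mem_filter, mem_Icc, subset_empty,
        Nat.primeFactors_eq_empty] at hn
      rw [mem_singleton]
      omega
    simpa using (card_le_card hsub).trans (card_singleton 1).le
  | @insert p s hps ih =>
    have hp := hs p (mem_insert_self p s)
    rcases Nat.eq_zero_or_pos N with rfl | hN
    · simp only [factoredNumbersUpTo, Icc_eq_empty_of_lt zero_lt_one, filter_empty, card_empty,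
        CharP.cast_eq_zero, zero_mul]
      positivity
    set A := Nat.log p N
    set k := #s
    set L := ∑ r ∈ s, log r
    set P := ∏ r ∈ s, log r
    have hA : A * log p ≤ log N := by
      rw [← log_pow]
      exact log_le_log (pow_pos (by exact_mod_cast hp.pos) A)
        (by exact_mod_cast Nat.pow_log_le_self p hN.ne')
    have hterm : ∀ a ∈ range (A + 1),
        #(factoredNumbersUpTo s (N / p ^ a)) * k.factorial * P ≤ (log N + L - a * log p) ^ k := by
      intro a ha
      have hlog := log_natCast_div_add_log_le
        (Nat.pow_le_of_le_log hN.ne' (Nat.lt_succ_iff.mp (mem_range.mp ha)))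
      push_cast at hlog
      rw [log_pow] at hlog
      exact (ih (fun r hr => hs r (mem_insert_of_mem hr)) _).trans
        (pow_le_pow_left₀ (by positivity) (by linarith) k)
    have hcount : (#(factoredNumbersUpTo (insert p s) N) : ℝ) ≤
        ∑ a ∈ range (A + 1), (#(factoredNumbersUpTo s (N / p ^ a)) : ℝ) :=
      mod_cast card_factoredNumbersUpTo_insert_le hp s N
    rw [card_insert_of_notMem hps, prod_insert hps, sum_insert hps, Nat.factorial_succ]
    push_cast
    calc (#(factoredNumbersUpTo (insert p s) N) : ℝ) * ((k + 1) * k.factorial) * (log p * P)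
        = (k + 1) * log p * (#(factoredNumbersUpTo (insert p s) N) * k.factorial * P) := by ring
      _ ≤ (k + 1) * log p * ∑ a ∈ range (A + 1),
            #(factoredNumbersUpTo s (N / p ^ a)) * k.factorial * P := by
          rw [← sum_mul, ← sum_mul]
          gcongr
      _ ≤ (k + 1) * log p * ∑ a ∈ range (A + 1), (log N + L - a * log p) ^ k := by
          gcongr with a ha
          exact hterm a ha
      _ ≤ (log N + L + log p) ^ (k + 1) :=
          mul_sum_range_sub_pow_le (log_natCast_nonneg p)
            (hA.trans (le_add_of_nonneg_right (by positivity))) k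
      _ = (log N + (log p + L)) ^ (k + 1) := by ring

lemma Aq_eq_card_factoredNumbersUpTo {q : ℕ} (hq : q ≠ 0) (X : ℝ) :
    Aq q X = #(factoredNumbersUpTo q.primeFactors ⌊X⌋₊) := by
  unfold Aq factoredNumbersUpTo
  congr 1
  ext n
  simp only [mem_filter, subset_iff, Nat.mem_primeFactors]
  refine and_congr_right fun hn => ⟨fun h p ⟨hp, hpn, _⟩ => ⟨hp, h p hp hpn, hq⟩,
    fun h p hp hpn => (h ⟨hp, hpn, by simp only [mem_Icc] at hn; omega⟩).2.1⟩

lemma one_le_log_natCast {n : ℕ} (hn : 3 ≤ n) : 1 ≤ log n := by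
  rw [le_log_iff_exp_le (by positivity)]
  calc exp 1 ≤ 3 := (exp_one_lt_d9.trans (by norm_num)).le
    _ ≤ n := by exact_mod_cast hn

lemma log_two_le_prod_log {s : Finset ℕ} (hs : ∀ p ∈ s, p.Prime) :
    log 2 ≤ ∏ p ∈ s, log p := by
  have hrest : 1 ≤ ∏ p ∈ s.erase 2, log p := one_le_prod fun p hp =>
    one_le_log_natCast ((hs p (mem_of_mem_erase hp)).two_le.lt_of_ne' (ne_of_mem_erase hp))
  by_cases h2 : 2 ∈ s
  · rw [← mul_prod_erase s _ h2]
    exact_mod_cast le_mul_of_one_le_right (log_nonneg one_le_two) hrest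
  · rw [erase_eq_of_notMem h2] at hrest
    exact (log_le_sub_one_of_pos two_pos).trans (by linarith)

lemma sum_log_primeFactors {q : ℕ} (hq : Squarefree q) :
    ∑ p ∈ q.primeFactors, log p = log q := by
  conv_rhs => rw [← Nat.prod_primeFactors_of_squarefree hq]
  push_cast
  exact (log_prod fun p hp => by exact_mod_cast (Nat.prime_of_mem_primeFactors hp).ne_zero).symm

theorem stmt5 :
    ∃ C : ℝ, 0 < C ∧ ∀ q : ℕ, Squarefree q → 2 ≤ q → ∀ X : ℝ, 2 ≤ X →
      (Aq q X : ℝ) ≤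
        C * (1 / (Nat.factorial q.primeFactors.card : ℝ)) *
          (Real.log X + 2 * Real.sqrt q.primeFactors.card * Real.log q) ^
            q.primeFactors.card := by
  refine ⟨(log 2)⁻¹, inv_pos.2 (log_pos one_lt_two), fun q hsq hq X hX => ?_⟩
  set k := q.primeFactors.card
  have hprime : ∀ p ∈ q.primeFactors, p.Prime := fun p hp => Nat.prime_of_mem_primeFactors hp
  have hcount := card_factoredNumbersUpTo_mul_le hprime ⌊X⌋₊
  rw [sum_log_primeFactors hsq] at hcount
  have hk : (1 : ℝ) ≤ k := by exact_mod_cast card_pos.2 (Nat.nonempty_primeFactors.2 hq)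
  have hlogX : log ⌊X⌋₊ ≤ log X :=
    log_le_log (by exact_mod_cast Nat.floor_pos.2 (by linarith)) (Nat.floor_le (by linarith))
  have hlogq : log q ≤ 2 * √k * log q :=
    le_mul_of_one_le_left (log_natCast_nonneg q) (by nlinarith [one_le_sqrt.2 hk])
  have hbase : (log ⌊X⌋₊ + log q) ^ k ≤ (log X + 2 * √k * log q) ^ k :=
    pow_le_pow_left₀ (by positivity) (by linarith) k
  have hP := log_two_le_prod_log hprime
  rw [Aq_eq_card_factoredNumbersUpTo (by omega)]
  have hlog2 : 0 < log 2 := log_pos one_lt_two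
  field_simp
  calc _ ≤ (#(factoredNumbersUpTo q.primeFactors ⌊X⌋₊) : ℝ) * k.factorial *
        ∏ p ∈ q.primeFactors, log p := by
        rw [mul_right_comm]
        gcongr
    _ ≤ _ := hcount.trans hbase
end

section
/- There exists an absolute constant C > 0 such that for every integer m ≥ 1, ∑ 1/q, where the sum runs over all squarefull integers q ≥ 1 with τ(q) ≡ 0 (mod m), is at most C·m^{−(log 2)/2}. -/
open scoped Classical

/-- A positive integer is squarefull if every prime dividing it does so at least twice. -/
def IsSquarefull (q : ℕ) : Prop := ∀ p : ℕ, p.Prime → p ∣ q → p ^ 2 ∣ q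

private lemma sqfull_decomp {q : ℕ} (hq : 1 ≤ q) (h : IsSquarefull q) :
    ∃ t a : ℕ, 1 ≤ t ∧ 1 ≤ a ∧ q = t ^ 2 * a ^ 3 := by
  obtain ⟨a, b, ha0, hb0, hab, hsf⟩ := Nat.sq_mul_squarefree_of_pos hq
  have hadvd : a ∣ b := by
    rw [← Nat.factorization_le_iff_dvd ha0.ne' hb0.ne']
    intro p
    by_cases hp : p.Prime
    · by_cases hpa : p ∣ a
      · have hpq : p ∣ q := hab ▸ Dvd.dvd.mul_left hpa (b ^ 2)
        have hp2 : p ^ 2 ∣ b ^ 2 * a := hab ▸ h p hp hpq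
        have hpb : p ∣ b := by
          by_contra hpb
          have hcop : Nat.Coprime (p ^ 2) (b ^ 2) :=
            Nat.Coprime.pow _ _ ((Nat.Prime.coprime_iff_not_dvd hp).mpr hpb)
          have hdvda : p ^ 2 ∣ a := Nat.Coprime.dvd_of_dvd_mul_left hcop hp2
          exact hp.one_lt.ne' (Nat.isUnit_iff.mp (hsf p (by simpa [pow_two] using hdvda)))
        have h1 : a.factorization p ≤ 1 := hsf.natFactorization_le_one p
        have h2 : 1 ≤ b.factorization p :=
          Nat.Prime.factorization_pos_of_dvd hp hb0.ne' hpb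
        omega
      · simp [Nat.factorization_eq_zero_of_not_dvd hpa]
    · simp [Nat.factorization_eq_zero_of_not_prime _ hp]
  obtain ⟨t, rfl⟩ := hadvd
  refine ⟨t, a, ?_, ha0, by rw [← hab]; ring⟩
  rcases Nat.eq_zero_or_pos t with rfl | ht
  · simp at hb0
  · exact ht

theorem stmt9 :
    ∃ C : ℝ, 0 < C ∧ ∀ m : ℕ, 1 ≤ m →
      (∑' q : ℕ, if 1 ≤ q ∧ IsSquarefull q ∧ m ∣ tdiv q then (1 : ℝ) / q else 0) ≤
        C * (m : ℝ) ^ (-(Real.log 2) / 2) := by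
  have hlog2 : 0 < Real.log 2 := Real.log_pos one_lt_two
  set s : ℝ := Real.log 2 / 2 with hs_def
  have hs0 : 0 < s := by positivity
  have hs2 : s < 1 / 2 := by
    have := Real.log_two_lt_d9
    rw [hs_def]; linarith
  have h1s : (0 : ℝ) < 1 - s := by linarith
  set g : ℕ → ℝ := fun q => if 1 ≤ q ∧ IsSquarefull q then (q : ℝ) ^ (-(1 - s)) else 0
    with hg_def
  have hg_nonneg : ∀ q, 0 ≤ g q := by
    intro q; rw [hg_def]; dsimp only; split
    · positivity
    · exact le_refl 0
  set G : ℕ × ℕ → ℝ := fun p => (p.1 : ℝ) ^ (-(2 * (1 - s))) * (p.2 : ℝ) ^ (-(3 * (1 - s)))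
    with hG_def
  have hG_nonneg : ∀ p, 0 ≤ G p := by
    intro p; rw [hG_def]; positivity
  have hGsum : Summable G := by
    have h1 : Summable (fun n : ℕ => (n : ℝ) ^ (-(2 * (1 - s)))) :=
      Real.summable_nat_rpow.2 (by linarith)
    have h2 : Summable (fun n : ℕ => (n : ℝ) ^ (-(3 * (1 - s)))) :=
      Real.summable_nat_rpow.2 (by linarith)
    exact h1.mul_of_nonneg h2 (fun n => Real.rpow_nonneg n.cast_nonneg _)
      (fun n => Real.rpow_nonneg n.cast_nonneg _)
  have hdec : ∀ q : ℕ, ∃ p : ℕ × ℕ,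
      if 1 ≤ q ∧ IsSquarefull q then 1 ≤ p.1 ∧ q = p.1 ^ 2 * p.2 ^ 3 else p = (0, q) := by
    intro q
    by_cases h : 1 ≤ q ∧ IsSquarefull q
    · obtain ⟨t, a, ht, _, hq⟩ := sqfull_decomp h.1 h.2
      refine ⟨(t, a), ?_⟩
      rw [if_pos h]
      exact ⟨ht, hq⟩
    · exact ⟨(0, q), by rw [if_neg h]⟩
  choose i hi using hdec
  have hinj : Function.Injective i := by
    intro q1 q2 hiq
    have h1 := hi q1
    have h2 := hi q2
    by_cases c1 : 1 ≤ q1 ∧ IsSquarefull q1 <;> by_cases c2 : 1 ≤ q2 ∧ IsSquarefull q2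
    · rw [if_pos c1] at h1; rw [if_pos c2] at h2
      rw [h1.2, h2.2, hiq]
    · rw [if_pos c1] at h1; rw [if_neg c2] at h2
      rw [hiq, h2] at h1
      exact absurd h1.1 (by simp)
    · rw [if_neg c1] at h1; rw [if_pos c2] at h2
      rw [hiq] at h1
      rw [h1] at h2
      exact absurd h2.1 (by simp)
    · rw [if_neg c1] at h1; rw [if_neg c2] at h2
      rw [h1, h2] at hiq
      simpa using hiq
  have hg_le : ∀ q, g q ≤ G (i q) := by
    intro q
    have h1 := hi q
    rw [hg_def]; dsimp only
    by_cases c : 1 ≤ q ∧ IsSquarefull q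
    · rw [if_pos c]
      rw [if_pos c] at h1
      obtain ⟨ht, hq⟩ := h1
      have e1 : ((((i q).1 : ℝ)) ^ (2 : ℕ)) ^ (-(1 - s)) = ((i q).1 : ℝ) ^ (-(2 * (1 - s))) := by
        rw [← Real.rpow_natCast ((i q).1 : ℝ) 2, ← Real.rpow_mul (Nat.cast_nonneg _)]
        congr 1
        push_cast; ring
      have e2 : ((((i q).2 : ℝ)) ^ (3 : ℕ)) ^ (-(1 - s)) = ((i q).2 : ℝ) ^ (-(3 * (1 - s))) := by
        rw [← Real.rpow_natCast ((i q).2 : ℝ) 3, ← Real.rpow_mul (Nat.cast_nonneg _)]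
        congr 1
        push_cast; ring
      have hGval : G (i q) = (q : ℝ) ^ (-(1 - s)) := by
        rw [hG_def]
        dsimp only
        rw [← e1, ← e2, ← Real.mul_rpow (by positivity) (by positivity)]
        congr 1
        conv_rhs => rw [hq]
        push_cast; ring
      rw [hGval]
    · rw [if_neg c]
      exact hG_nonneg _
  have hgsum : Summable g :=
    Summable.of_nonneg_of_le hg_nonneg hg_le (hGsum.comp_injective hinj)
  refine ⟨∑' q, g q, ?_, ?_⟩
  · have hsq1 : IsSquarefull 1 := by
      intro p hp hpd
      have hp1 : p = 1 := Nat.dvd_one.mp hpd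
      simp [hp1]
    have h1 : g 1 = 1 := by
      rw [hg_def]; dsimp only
      rw [if_pos ⟨le_refl 1, hsq1⟩]
      simp
    calc (0:ℝ) < 1 := one_pos
    _ = g 1 := h1.symm
    _ ≤ ∑' q, g q := Summable.le_tsum hgsum 1 (fun b _ => hg_nonneg b)
  · intro m hm
    have hm0 : (0:ℝ) < m := by exact_mod_cast hm
    have hexp : -(Real.log 2) / 2 = -s := by rw [hs_def]; ring
    rw [hexp]
    have key : ∀ q : ℕ, (if 1 ≤ q ∧ IsSquarefull q ∧ m ∣ tdiv q then (1 : ℝ) / q else 0)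
        ≤ g q * (m : ℝ) ^ (-s) := by
      intro q
      by_cases c : 1 ≤ q ∧ IsSquarefull q ∧ m ∣ tdiv q
      · rw [if_pos c]
        obtain ⟨hq1, hsf, hdvd⟩ := c
        have hq0 : (0:ℝ) < q := by exact_mod_cast hq1
        have htdiv_pos : 0 < tdiv q := by
          have hmem : q ∈ q.divisors := Nat.mem_divisors_self q (by omega)
          exact Finset.card_pos.mpr ⟨q, hmem⟩
        have hm_le : m ≤ tdiv q := Nat.le_of_dvd htdiv_pos hdvd
        have htdiv_le : tdiv q ≤ q := by
          have hsub : q.divisors ⊆ Finset.Icc 1 q := by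
            intro d hd
            rw [Finset.mem_Icc]
            exact ⟨Nat.pos_of_mem_divisors hd, Nat.divisor_le hd⟩
          calc tdiv q ≤ (Finset.Icc 1 q).card := Finset.card_le_card hsub
          _ = q := by rw [Nat.card_Icc]; omega
        have hmq : (m:ℝ) ≤ (q:ℝ) := by exact_mod_cast le_trans hm_le htdiv_le
        have hstep : (q:ℝ) ^ (-s) ≤ (m:ℝ) ^ (-s) :=
          Real.rpow_le_rpow_of_nonpos hm0 hmq (by linarith)
        have hgq : g q = (q : ℝ) ^ (-(1 - s)) := by
          rw [hg_def]; dsimp only; rw [if_pos ⟨hq1, hsf⟩]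
        rw [hgq]
        calc (1:ℝ) / q = (q:ℝ) ^ (-(1:ℝ)) := by
              rw [Real.rpow_neg_one]; exact one_div _
        _ = (q:ℝ) ^ (-(1 - s) + -s) := by congr 1; ring
        _ = (q:ℝ) ^ (-(1 - s)) * (q:ℝ) ^ (-s) := Real.rpow_add hq0 _ _
        _ ≤ (q:ℝ) ^ (-(1 - s)) * (m:ℝ) ^ (-s) := by
              apply mul_le_mul_of_nonneg_left hstep (Real.rpow_nonneg hq0.le _)
      · rw [if_neg c]
        exact mul_nonneg (hg_nonneg q) (Real.rpow_nonneg hm0.le _)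
    have hf_nonneg : ∀ q : ℕ,
        0 ≤ (if 1 ≤ q ∧ IsSquarefull q ∧ m ∣ tdiv q then (1 : ℝ) / q else 0) := by
      intro q; split
      · positivity
      · exact le_refl 0
    have hfs : Summable (fun q : ℕ =>
        if 1 ≤ q ∧ IsSquarefull q ∧ m ∣ tdiv q then (1 : ℝ) / q else 0) :=
      Summable.of_nonneg_of_le hf_nonneg key (hgsum.mul_right _)
    calc (∑' q : ℕ, if 1 ≤ q ∧ IsSquarefull q ∧ m ∣ tdiv q then (1 : ℝ) / q else 0)
        ≤ ∑' q : ℕ, g q * (m:ℝ) ^ (-s) := Summable.tsum_le_tsum key hfs (hgsum.mul_right _)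
    _ = (∑' q, g q) * (m:ℝ) ^ (-s) := hgsum.tsum_mul_right _
end

section
/- There exists an absolute constant C > 0 such that for every prime p, ∑ 1/q, where the sum runs over all squarefull integers q ≥ 1 with τ(q) ≡ 0 (mod p), is at most C·2^{−p/2}. -/
open scoped Classical

lemma isSquarefull_ordCompl {q l : ℕ} (hq : q ≠ 0) (hsq : IsSquarefull q) (hl : l.Prime) :
    IsSquarefull (ordCompl[l] q) := by
  intro s hs hsd
  have hm : ordCompl[l] q ∣ q := Nat.ordCompl_dvd q l
  have h2 : s ^ 2 ∣ q := hsq s hs (hsd.trans hm)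
  have hsl : s ≠ l := by
    rintro rfl
    exact Nat.not_dvd_ordCompl hs hq hsd
  have hcop : Nat.Coprime (s ^ 2) (l ^ q.factorization l) :=
    ((Nat.coprime_primes hs hl).mpr hsl).pow _ _
  have hself := Nat.ordProj_mul_ordCompl_eq_self q l
  refine (Nat.Coprime.dvd_of_dvd_mul_left hcop ?_)
  rw [hself]
  exact h2

lemma exists_sq_cube : ∀ m : ℕ, 0 < m → IsSquarefull m →
    ∃ u v : ℕ, 0 < u ∧ 0 < v ∧ m = u ^ 2 * v ^ 3 := by
  intro m
  induction m using Nat.strong_induction_on with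
  | _ m ih =>
    intro hm hsq
    rcases eq_or_ne m 1 with rfl | hne
    · exact ⟨1, 1, one_pos, one_pos, by norm_num⟩
    · obtain ⟨r, hr, hrd⟩ := Nat.exists_prime_and_dvd hne
      have he2 : 2 ≤ m.factorization r :=
        (Nat.Prime.pow_dvd_iff_le_factorization hr hm.ne').mp (hsq r hr hrd)
      have hm'pos : 0 < ordCompl[r] m := Nat.ordCompl_pos r hm.ne'
      have hm'sq : IsSquarefull (ordCompl[r] m) := isSquarefull_ordCompl hm.ne' hsq hr
      have hlt : ordCompl[r] m < m :=
        Nat.div_lt_self hm (Nat.one_lt_pow (by omega) hr.two_le)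
      obtain ⟨u', v', hu', hv', heq⟩ := ih _ hlt hm'pos hm'sq
      have hsplit : m = r ^ m.factorization r * ordCompl[r] m :=
        (Nat.ordProj_mul_ordCompl_eq_self m r).symm
      rcases Nat.even_or_odd (m.factorization r) with he' | he'
      · obtain ⟨k, hk⟩ := he'
        refine ⟨r ^ k * u', v', mul_pos (pow_pos hr.pos k) hu', hv', ?_⟩
        rw [hsplit, heq, hk]; ring
      · obtain ⟨k, hk⟩ := he'
        have hk1 : 1 ≤ k := by omega
        obtain ⟨k', rfl⟩ : ∃ k', k = k' + 1 := ⟨k - 1, by omega⟩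
        refine ⟨r ^ k' * u', r * v', mul_pos (pow_pos hr.pos k') hu', mul_pos hr.pos hv', ?_⟩
        rw [hsplit, heq, hk]; ring

lemma extract {p q : ℕ} (hp : p.Prime) (hp5 : 5 ≤ p) (hq : 1 ≤ q) (hsq : IsSquarefull q)
    (hdvd : p ∣ tdiv q) :
    ∃ x : ℕ × ℕ × ℕ × ℕ, x.1.Prime ∧ 0 < x.2.2.1 ∧ 0 < x.2.2.2 ∧ p ≤ x.2.1 + 5 ∧
      q = x.1 ^ (x.2.1 + 4) * (x.2.2.1 ^ 2 * x.2.2.2 ^ 3) := by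
  have hq0 : q ≠ 0 := by omega
  have hcard : tdiv q = q.factorization.prod fun _ k => k + 1 := Nat.card_divisors hq0
  rw [hcard, Finsupp.prod] at hdvd
  obtain ⟨l, hlmem, hpl⟩ := (hp.prime.dvd_finset_prod_iff _).mp hdvd
  have hl : l.Prime := Nat.prime_of_mem_primeFactors (by rwa [← Nat.support_factorization])
  have hld : l ∣ q := Nat.dvd_of_mem_primeFactors (by rwa [← Nat.support_factorization])
  have he2 : 2 ≤ q.factorization l :=
    (Nat.Prime.pow_dvd_iff_le_factorization hl hq0).mp (hsq l hl hld)
  have hple : p ≤ q.factorization l + 1 := Nat.le_of_dvd (by omega) hpl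
  have he4 : 4 ≤ q.factorization l := by omega
  obtain ⟨u, v, hu, hv, heq⟩ := exists_sq_cube (ordCompl[l] q)
    (Nat.ordCompl_pos l hq0) (isSquarefull_ordCompl hq0 hsq hl)
  refine ⟨⟨l, q.factorization l - 4, u, v⟩, hl, hu, hv, by simp; omega, ?_⟩
  have : q.factorization l - 4 + 4 = q.factorization l := by omega
  simp only [this]
  rw [← heq]
  exact (Nat.ordProj_mul_ordCompl_eq_self q l).symm

set_option maxHeartbeats 2000000 in
theorem stmt10 :
    ∃ C : ℝ, 0 < C ∧ ∀ p : ℕ, p.Prime →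
      (∑' q : ℕ, if 1 ≤ q ∧ IsSquarefull q ∧ p ∣ tdiv q then (1 : ℝ) / q else 0) ≤
        C * (2 : ℝ) ^ (-(p : ℝ) / 2) := by
  set t : ℝ := (Real.sqrt 2)⁻¹ with ht
  have hs2pos : (0:ℝ) < Real.sqrt 2 := Real.sqrt_pos.mpr (by norm_num)
  have ht0 : 0 < t := by rw [ht]; positivity
  have ht2 : t ^ 2 = 2⁻¹ := by
    rw [ht, inv_pow, Real.sq_sqrt (by norm_num : (0:ℝ) ≤ 2)]
  have hs2le : Real.sqrt 2 ≤ 2 := by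
    nlinarith [Real.sq_sqrt (show (0:ℝ) ≤ 2 by norm_num), Real.sqrt_nonneg 2]
  have hs2gt : 1 < Real.sqrt 2 := by
    nlinarith [Real.sq_sqrt (show (0:ℝ) ≤ 2 by norm_num), Real.sqrt_nonneg 2]
  have ht1 : t < 1 := by rw [ht]; exact inv_lt_one_of_one_lt₀ hs2gt
  have hthalf : 2⁻¹ ≤ t := by rw [ht]; exact inv_anti₀ hs2pos hs2le
  have hsum2 : Summable (fun n : ℕ => 1 / (n:ℝ) ^ 2) :=
    Real.summable_one_div_nat_pow.mpr one_lt_two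
  have hsum3 : Summable (fun n : ℕ => 1 / (n:ℝ) ^ 3) :=
    Real.summable_one_div_nat_pow.mpr (by norm_num)
  have hsumg : Summable (fun i : ℕ => t ^ i) := summable_geometric_of_lt_one ht0.le ht1
  set H : ℕ × ℕ → ℝ := fun x => 1 / (x.1:ℝ) ^ 2 * (1 / (x.2:ℝ) ^ 3) with hH
  have hHnn : ∀ x, 0 ≤ H x := fun x => by rw [hH]; positivity
  have hHsum : Summable H :=
    hsum2.mul_of_nonneg hsum3 (fun n => by positivity) (fun n => by positivity)
  set G : ℕ × ℕ × ℕ × ℕ → ℝ := fun x => 1 / (x.1:ℝ) ^ 2 * (t ^ x.2.1 * H x.2.2) with hG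
  have hGnn : ∀ x, 0 ≤ G x := fun x =>
    mul_nonneg (by positivity) (mul_nonneg (pow_nonneg ht0.le _) (hHnn _))
  have hGsum : Summable G :=
    hsum2.mul_of_nonneg
      (hsumg.mul_of_nonneg hHsum (fun i => pow_nonneg ht0.le i) hHnn)
      (fun n => by positivity)
      (fun x => mul_nonneg (pow_nonneg ht0.le _) (hHnn _))
  have hGt : 0 ≤ ∑' x, G x := tsum_nonneg hGnn
  have hHt : 0 ≤ ∑' x, H x := tsum_nonneg hHnn
  refine ⟨2 * (∑' x, G x) + 4 * (∑' x, H x) + 1, by linarith, ?_⟩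
  intro p hp
  have hrpow : (2:ℝ) ^ (-(p:ℝ)/2) = t ^ p := by
    rw [show (-(p:ℝ)/2) = (-(1/2)) * ((p:ℕ):ℝ) by push_cast; ring]
    rw [Real.rpow_mul (by norm_num : (0:ℝ) ≤ 2), Real.rpow_natCast]
    congr 1
    rw [show (-(1/2) : ℝ) = -(1/2) from rfl, Real.rpow_neg (by norm_num : (0:ℝ) ≤ 2),
      ← Real.sqrt_eq_rpow, ht]
  rw [hrpow]
  set P : Set ℕ := {q | 1 ≤ q ∧ IsSquarefull q ∧ p ∣ tdiv q} with hP
  have hind : (∑' q : ℕ, if 1 ≤ q ∧ IsSquarefull q ∧ p ∣ tdiv q then (1:ℝ)/q else 0)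
      = ∑' x : P, (1:ℝ) / ((x : ℕ) : ℝ) := by
    refine Eq.trans ?_ (tsum_subtype P (fun q : ℕ => (1:ℝ)/q)).symm
    apply tsum_congr
    intro q
    simp [Set.indicator_apply, hP, Set.mem_setOf_eq]
  rw [hind]
  by_cases hp5 : 5 ≤ p
  · have hex : ∀ x : P, ∃ y : ℕ × ℕ × ℕ × ℕ,
        ((x:ℕ) = y.1 ^ (y.2.1 + 4) * (y.2.2.1 ^ 2 * y.2.2.2 ^ 3)) ∧
        (1:ℝ)/((x:ℕ):ℝ) ≤ 2 * t ^ p * G y := by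
      rintro ⟨q, hq⟩
      obtain ⟨hq1, hqsq, hqdvd⟩ := hq
      obtain ⟨⟨l, i, u, v⟩, hl, hu, hv, hpi, hqe⟩ := extract hp hp5 hq1 hqsq hqdvd
      refine ⟨(l, i, u, v), hqe, ?_⟩
      have hpi' : p ≤ i + 5 := hpi
      have hqe' : q = l ^ (i + 4) * (u ^ 2 * v ^ 3) := hqe
      have hl' : l.Prime := hl
      have hu' : 0 < u := hu
      have hv' : 0 < v := hv
      have hl2 : (2:ℝ) ≤ l := by exact_mod_cast hl'.two_le
      have hl0 : (0:ℝ) < l := by linarith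
      have hu0 : (0:ℝ) < u := by exact_mod_cast hu'
      have hv0 : (0:ℝ) < v := by exact_mod_cast hv'
      have hkey : (1:ℝ) ≤ 2 * t ^ (p + i) * (l:ℝ) ^ (i + 2) := by
        have h1 : t ^ (2*i + 6) ≤ t ^ (p + i) :=
          pow_le_pow_of_le_one ht0.le ht1.le (by omega)
        have h2 : (2:ℝ) ^ (i + 2) ≤ (l:ℝ) ^ (i + 2) := pow_le_pow_left₀ (by norm_num) hl2 _
        have h3 : (1:ℝ) = 2 * t ^ (2*i+6) * 2 ^ (i+2) := by
          have h4 : (2:ℝ) * t^2 = 1 := by rw [ht2]; norm_num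
          calc (1:ℝ) = ((2:ℝ) * t^2) ^ (i+3) := by rw [h4]; norm_num
          _ = 2 * t ^ (2*i+6) * 2 ^ (i+2) := by ring
        calc (1:ℝ) = 2 * t^(2*i+6) * 2^(i+2) := h3
        _ ≤ 2 * t^(p+i) * 2^(i+2) := by
            have : (0:ℝ) ≤ (2:ℝ)^(i+2) := by positivity
            nlinarith [h1]
        _ ≤ 2 * t^(p+i) * (l:ℝ)^(i+2) := by
            have h5 : (0:ℝ) ≤ 2 * t^(p+i) := by positivity
            exact mul_le_mul_of_nonneg_left h2 h5
      have hcast : ((q:ℕ):ℝ) = (l:ℝ) ^ (i+4) * ((u:ℝ)^2 * (v:ℝ)^3) := by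
        exact_mod_cast congrArg (Nat.cast : ℕ → ℝ) hqe'
      have hGval : G (l,i,u,v) = 1/(l:ℝ)^2 * (t^i * (1/(u:ℝ)^2 * (1/(v:ℝ)^3))) := rfl
      rw [hcast, hGval, div_le_iff₀ (by positivity)]
      have hpow : (l:ℝ)^(i+4) = (l:ℝ)^(i+2) * (l:ℝ)^2 := by rw [← pow_add]
      have expand : 2*t^p*(1/(l:ℝ)^2 * (t^i * (1/(u:ℝ)^2 * (1/(v:ℝ)^3)))) *
          ((l:ℝ)^(i+4)*((u:ℝ)^2*(v:ℝ)^3)) = 2 * t^(p+i) * (l:ℝ)^(i+2) := by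
        rw [hpow, pow_add]
        field_simp
        ring
      rw [expand]; exact hkey
    choose e he1 he2 using hex
    have heinj : Function.Injective e := by
      intro a b hab
      apply Subtype.ext
      rw [he1 a, he1 b, hab]
    have hgsum : Summable (fun y => 2 * t ^ p * G y) := hGsum.mul_left _
    calc (∑' x : P, (1:ℝ)/((x:ℕ):ℝ))
        ≤ ∑' y, 2 * t ^ p * G y :=
          Summable.tsum_le_tsum_of_inj e heinj
            (fun c _ => mul_nonneg (mul_nonneg (by norm_num) (pow_nonneg ht0.le p)) (hGnn c))
            he2
            (Summable.of_nonneg_of_le (fun x => by positivity) he2 (hgsum.comp_injective heinj))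
            hgsum
      _ = 2 * t ^ p * ∑' y, G y := tsum_mul_left
      _ ≤ (2 * (∑' x, G x) + 4 * (∑' x, H x) + 1) * t ^ p := by
          nlinarith [pow_nonneg ht0.le p, hGt, hHt]
  · push_neg at hp5
    have hp3 : p ≤ 3 := by
      rcases Nat.lt_or_ge p 4 with h | h
      · omega
      · have h4 : p = 4 := by omega
        rw [h4] at hp; norm_num at hp
    have hfour : (1:ℝ) ≤ 4 * t ^ p := by
      have h1 : t ^ 3 ≤ t ^ p := pow_le_pow_of_le_one ht0.le ht1.le hp3
      have h3 : (1:ℝ) ≤ 4 * t^3 := by nlinarith [ht2, hthalf, ht0.le]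
      nlinarith [h1]
    have hex : ∀ x : P, ∃ y : ℕ × ℕ, ((x:ℕ) = y.1 ^ 2 * y.2 ^ 3) ∧
        (1:ℝ)/((x:ℕ):ℝ) ≤ 4 * t ^ p * H y := by
      rintro ⟨q, hq⟩
      obtain ⟨hq1, hqsq, _⟩ := hq
      obtain ⟨u, v, hu, hv, hqe⟩ := exists_sq_cube q (by omega) hqsq
      refine ⟨(u, v), hqe, ?_⟩
      have hu0 : (0:ℝ) < u := by exact_mod_cast hu
      have hv0 : (0:ℝ) < v := by exact_mod_cast hv
      have hcast : ((q:ℕ):ℝ) = (u:ℝ)^2 * (v:ℝ)^3 := by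
        exact_mod_cast congrArg (Nat.cast : ℕ → ℝ) hqe
      have hHval : H (u,v) = 1/(u:ℝ)^2 * (1/(v:ℝ)^3) := rfl
      rw [hcast, hHval]
      calc 1/((u:ℝ)^2*(v:ℝ)^3) = 1 * (1/(u:ℝ)^2 * (1/(v:ℝ)^3)) := by
            rw [one_mul, div_mul_div_comm, one_mul]
      _ ≤ (4*t^p) * (1/(u:ℝ)^2 * (1/(v:ℝ)^3)) :=
            mul_le_mul_of_nonneg_right hfour (by positivity)
    choose e he1 he2 using hex
    have heinj : Function.Injective e := by
      intro a b hab
      apply Subtype.ext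
      rw [he1 a, he1 b, hab]
    have hgsum : Summable (fun y => 4 * t ^ p * H y) := hHsum.mul_left _
    calc (∑' x : P, (1:ℝ)/((x:ℕ):ℝ))
        ≤ ∑' y, 4 * t ^ p * H y :=
          Summable.tsum_le_tsum_of_inj e heinj
            (fun c _ => mul_nonneg (mul_nonneg (by norm_num) (pow_nonneg ht0.le p)) (hHnn c))
            he2
            (Summable.of_nonneg_of_le (fun x => by positivity) he2 (hgsum.comp_injective heinj))
            hgsum
      _ = 4 * t ^ p * ∑' y, H y := tsum_mul_left
      _ ≤ (2 * (∑' x, G x) + 4 * (∑' x, H x) + 1) * t ^ p := by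
          nlinarith [pow_nonneg ht0.le p, hGt, hHt]
end

section
/- There exists an absolute constant C > 0 such that for every squarefree integer q ≥ 2 and every real x ≥ 2, one has ∑ 1/n ≤ C·e^{4·ω(q)}·(log x)^{ω(q)}/x, where the sum runs over all positive integers n ≥ x such that every prime dividing n also divides q. -/
/-!
Rankin's trick: for `n ≥ x` and `0 < σ ≤ 1` we have `1 / n ≤ x ^ (σ - 1) * n ^ (-σ)`, so the sum
is at most `x ^ (σ - 1)` times the Euler product `∏_{p ∣ q} (1 - p ^ (-σ))⁻¹`. With
`σ = 1 / (2 log x)` the prefactor is `e^{1/2} / x`, and each Euler factor is at most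
`1 + 1 / (σ log 2) ≪ log x`.
-/

open scoped Classical

open Real

noncomputable def natRpowHom (s : ℝ) : ℕ →* ℝ where
  toFun n := (n : ℝ) ^ s
  map_one' := by simp
  map_mul' m n := by push_cast; exact mul_rpow m.cast_nonneg n.cast_nonneg

lemma inv_one_sub_exp_neg_le {u : ℝ} (hu : 0 < u) : (1 - exp (-u))⁻¹ ≤ 1 + u⁻¹ := by
  have hexp : exp (-u) * (1 + u) ≤ 1 := by
    rw [exp_neg, inv_mul_le_one₀ (exp_pos u)]; linarith [add_one_le_exp u]
  calc (1 - exp (-u))⁻¹ ≤ (u / (1 + u))⁻¹ := by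
        refine inv_anti₀ (by positivity) ?_
        rw [div_le_iff₀ (by positivity)]; linarith
    _ = 1 + u⁻¹ := by rw [inv_div, add_div, div_self hu.ne', one_div, add_comm]

lemma inv_one_sub_rpow_neg_le {p σ : ℝ} (hp : 1 < p) (hσ : 0 < σ) :
    (1 - p ^ (-σ))⁻¹ ≤ 1 + (σ * log p)⁻¹ := by
  rw [rpow_def_of_pos (by linarith), mul_neg, mul_comm]
  exact inv_one_sub_exp_neg_le (mul_pos hσ (log_pos hp))

lemma one_div_le_rpow_sub_one_mul_rpow_neg {x y σ : ℝ} (hx : 0 < x) (hxy : x ≤ y) (hσ : σ ≤ 1) :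
    1 / y ≤ x ^ (σ - 1) * y ^ (-σ) := by
  have hy : 0 < y := hx.trans_le hxy
  calc 1 / y = y ^ (σ - 1) * y ^ (-σ) := by
        rw [← rpow_add hy, show σ - 1 + -σ = -1 by ring, rpow_neg_one, one_div]
    _ ≤ x ^ (σ - 1) * y ^ (-σ) :=
        mul_le_mul_of_nonneg_right (rpow_le_rpow_of_nonpos hx hxy (by linarith)) (by positivity)

lemma Nat.Prime.cast_rpow_neg_lt_one {p : ℕ} (hp : p.Prime) {σ : ℝ} (hσ : 0 < σ) :
    (p : ℝ) ^ (-σ) < 1 :=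
  rpow_lt_one_of_one_lt_of_neg (by exact_mod_cast hp.one_lt) (neg_neg_of_pos hσ)

lemma tsum_one_div_factoredNumbers_ge_le (s : Finset ℕ) {x σ : ℝ} (hx : 0 < x) (hσ₀ : 0 < σ)
    (hσ₁ : σ ≤ 1) :
    ∑' n : ℕ, (if x ≤ n ∧ n ∈ Nat.factoredNumbers s then 1 / (n : ℝ) else 0) ≤
      x ^ (σ - 1) * ∏ p ∈ s with p.Prime, (1 - (p : ℝ) ^ (-σ))⁻¹ := by
  have hlt : ∀ {p : ℕ}, p.Prime → ‖natRpowHom (-σ) p‖ < 1 := fun {p} hp => by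
    simpa [natRpowHom, abs_of_nonneg (rpow_nonneg p.cast_nonneg _)] using
      hp.cast_rpow_neg_lt_one hσ₀
  have heuler :=
    (EulerProduct.summable_and_hasSum_factoredNumbers_prod_filter_prime_geometric hlt s).2
  let g : ℕ → ℝ := (Nat.factoredNumbers s).indicator fun n => x ^ (σ - 1) * (n : ℝ) ^ (-σ)
  have hg : HasSum g (x ^ (σ - 1) * ∏ p ∈ s with p.Prime, (1 - (p : ℝ) ^ (-σ))⁻¹) :=
    (hasSum_subtype_iff_indicator).mp (heuler.mul_left _)
  have hle : ∀ n : ℕ, (if x ≤ n ∧ n ∈ Nat.factoredNumbers s then 1 / (n : ℝ) else 0) ≤ g n := by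
    intro n
    split_ifs with h
    · rw [show g n = _ from Set.indicator_of_mem h.2 _]
      exact one_div_le_rpow_sub_one_mul_rpow_neg hx h.1 hσ₁
    · exact Set.indicator_nonneg (fun _ _ => by positivity) n
  rw [← hg.tsum_eq]
  have hnonneg : ∀ n : ℕ, 0 ≤ if x ≤ n ∧ n ∈ Nat.factoredNumbers s then 1 / (n : ℝ) else 0 :=
    fun n => by split_ifs <;> positivity
  exact (hg.summable.of_nonneg_of_le hnonneg hle).tsum_le_tsum hle hg.summable

lemma mem_factoredNumbers_primeFactors {q n : ℕ} (hq : q ≠ 0) :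
    n ∈ Nat.factoredNumbers q.primeFactors ↔ ∀ p, p.Prime → p ∣ n → p ∣ q := by
  simp only [Nat.mem_factoredNumbers', Nat.mem_primeFactors, hq, ne_eq, not_false_eq_true,
    and_true]
  exact forall₂_congr fun p hp => imp_congr_right fun _ => and_iff_right hp

lemma inv_one_sub_rpow_neg_le_exp_four_mul_log {p x : ℝ} (hp : 2 ≤ p) (hx : 2 ≤ x) :
    (1 - p ^ (-(2 * log x)⁻¹))⁻¹ ≤ exp 4 * log x := by
  have hlog2 : 0.69 < log 2 := by linarith [log_two_gt_d9]
  have hlog2x : log 2 ≤ log x := log_le_log (by norm_num) hx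
  have hlog2p : log 2 ≤ log p := log_le_log (by norm_num) hp
  have hlogx : 0 < log x := by linarith
  calc (1 - p ^ (-(2 * log x)⁻¹))⁻¹ ≤ 1 + ((2 * log x)⁻¹ * log p)⁻¹ :=
        inv_one_sub_rpow_neg_le (by linarith) (by positivity)
    _ = 1 + 2 * log x / log p := by field_simp
    _ ≤ log x / log 2 + 2 * log x / log 2 := by
        gcongr
        rw [le_div_iff₀ (by positivity)]; linarith
    _ = 3 / log 2 * log x := by ring
    _ ≤ exp 4 * log x := by
        gcongr
        rw [div_le_iff₀ (by positivity)]
        nlinarith [add_one_le_exp 4]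

theorem stmt15 :
    ∃ C : ℝ, 0 < C ∧ ∀ q : ℕ, Squarefree q → 2 ≤ q → ∀ x : ℝ, 2 ≤ x →
      (∑' n : ℕ, if x ≤ (n : ℝ) ∧ 0 < n ∧ (∀ p : ℕ, p.Prime → p ∣ n → p ∣ q)
          then (1 : ℝ) / n else 0) ≤
        C * Real.exp (4 * q.primeFactors.card) *
          Real.log x ^ q.primeFactors.card / x := by
  refine ⟨exp (1 / 2), exp_pos _, fun q _ hq x hx => ?_⟩
  have hx₀ : 0 < x := by linarith
  have hlogx : 0 < log x := log_pos (by linarith)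
  set σ := (2 * log x)⁻¹ with hσ
  have hσ₁ : σ ≤ 1 :=
    inv_le_one_of_one_le₀ (by linarith [log_two_gt_d9, log_le_log (by norm_num) hx])
  have hxσ : x ^ (σ - 1) = exp (1 / 2) / x := by
    rw [rpow_def_of_pos hx₀, mul_sub, mul_one, exp_sub, exp_log hx₀]
    congr 2; rw [hσ]; field_simp
  have hcond : ∀ n : ℕ, (x ≤ n ∧ 0 < n ∧ ∀ p : ℕ, p.Prime → p ∣ n → p ∣ q) ↔
      (x ≤ n ∧ n ∈ Nat.factoredNumbers q.primeFactors) := fun n => by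
    rw [mem_factoredNumbers_primeFactors (by omega)]
    exact and_congr_right fun hxn => and_iff_right (by exact_mod_cast hx₀.trans_le hxn)
  simp_rw [hcond]
  calc _ ≤ x ^ (σ - 1) * ∏ p ∈ q.primeFactors with p.Prime, (1 - (p : ℝ) ^ (-σ))⁻¹ :=
        tsum_one_div_factoredNumbers_ge_le _ hx₀ (by positivity) hσ₁
    _ ≤ exp (1 / 2) / x * (exp 4 * log x) ^ q.primeFactors.card := by
        rw [hxσ, Finset.filter_true_of_mem fun p hp => Nat.prime_of_mem_primeFactors hp,
          ← Finset.prod_const]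
        refine mul_le_mul_of_nonneg_left (Finset.prod_le_prod (fun p hp => ?_) (fun p hp => ?_))
          (by positivity) <;> replace hp := Nat.prime_of_mem_primeFactors hp
        · exact inv_nonneg.mpr (sub_nonneg.mpr (hp.cast_rpow_neg_lt_one (by positivity)).le)
        · exact inv_one_sub_rpow_neg_le_exp_four_mul_log (by exact_mod_cast hp.two_le) hx
    _ = _ := by rw [mul_pow, ← exp_nat_mul]; ring_nf
end

section
/- There exists an absolute constant C > 0 such that for every odd prime p there is a real constant c_p with the property that for every real N ≥ 2, the number of positive integers n ≤ N with τ(n) ≡ 0 (mod p) equals c_p·N up to an error of at most C·N/(log N). -/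
open scoped Classical

/-!
The indicator `f` of `p ∤ τ(n)` is multiplicative, and `f(q) = 1 = f(1)` at every prime `q`
because `τ(q) = 2` and `p` is odd. Hence `g = f * μ` vanishes at primes, so it is supported on
powerful numbers, and `g(q^k) = f(q^k) - f(q^(k-1))` shows `|g| ≤ 1`. Powerful numbers have the
form `a²b³`, so `∑ |g(d)| d^(-3/4)` is bounded by a constant independent of `p`. From
`∑_{n ≤ N} f(n) = ∑_d g(d) ⌊N/d⌋` and `N/d - ⌊N/d⌋ ≤ (N/d)^(3/4)` we get
`∑_{n ≤ N} f(n) = (∑_d g(d)/d) N + O(N^(3/4))`, and `N^(3/4) ≤ 4 N / log N`.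
-/

open Finset ArithmeticFunction
open scoped ArithmeticFunction.zeta ArithmeticFunction.Moebius

def IsPowerful (n : ℕ) : Prop := ∀ q : ℕ, q.Prime → q ∣ n → q ^ 2 ∣ n

theorem IsPowerful.exists_eq_sq_mul_cube {n : ℕ} (hn : IsPowerful n) :
    ∃ a b : ℕ, n = a ^ 2 * b ^ 3 := by
  obtain ⟨a, b, rfl, ha⟩ := Nat.sq_mul_squarefree n
  -- a prime `q ∣ a` with `q ∤ b` would give `q² ∣ a`, so the squarefree part `a` divides `b`
  suffices hab : a ∣ b by
    obtain ⟨k, rfl⟩ := hab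
    exact ⟨k, a, by ring⟩
  rw [← Nat.prod_primeFactors_of_squarefree ha]
  refine prod_primes_dvd b (fun q hq => (Nat.prime_of_mem_primeFactors hq).prime) fun q hqa => ?_
  have hq := Nat.prime_of_mem_primeFactors hqa
  by_contra hqb
  have hcop : Nat.Coprime (q ^ 2) (b ^ 2) :=
    Nat.Coprime.pow 2 2 ((Nat.Prime.coprime_iff_not_dvd hq).mpr hqb)
  have hq2 : q ^ 2 ∣ a :=
    hcop.dvd_of_dvd_mul_left (hn q hq (dvd_mul_of_dvd_right (Nat.dvd_of_mem_primeFactors hqa) _))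
  exact Nat.squarefree_iff_prime_squarefree.mp ha q hq (by rwa [← sq])

noncomputable def powerfulRpowInv (s : ℝ) : ℕ → ℝ :=
  {d | IsPowerful d}.indicator fun d => ((d : ℝ) ^ s)⁻¹

theorem powerfulRpowInv_nonneg (s : ℝ) (d : ℕ) : 0 ≤ powerfulRpowInv s d :=
  Set.indicator_nonneg (fun _ _ => by positivity) d

theorem summable_powerfulRpowInv {s : ℝ} (hs : 1 / 2 < s) : Summable (powerfulRpowInv s) := by
  choose a b hab using fun d : {d // IsPowerful d} => IsPowerful.exists_eq_sq_mul_cube d.2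
  have hzeta : Summable fun k : ℕ => ((k : ℝ) ^ (2 * s))⁻¹ :=
    Real.summable_nat_rpow_inv.mpr (by linarith)
  have hinj : Function.Injective fun d => (a d, b d) := fun d e hde => by
    simp only [Prod.mk.injEq] at hde
    exact Subtype.ext (by rw [hab d, hab e, hde.1, hde.2])
  -- compare with `∑ (ab)^(-2s)` along the injection `a²b³ ↦ (a, b)`, using `(ab)² ≤ a²b³`
  refine summable_subtype_iff_indicator.mp <|
    ((hzeta.mul_of_nonneg hzeta (fun _ => by positivity) fun _ => by positivity).comp_injective
      hinj).of_nonneg_of_le (fun _ => inv_nonneg.mpr (Real.rpow_nonneg (Nat.cast_nonneg _) _))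
      fun d => ?_
  simp only [Function.comp_apply]
  rw [← mul_inv, ← Real.mul_rpow (by positivity) (by positivity), hab d]
  have hs0 : s ≠ 0 := by linarith
  by_cases h0 : a d * b d = 0
  · rcases Nat.mul_eq_zero.mp h0 with h0 | h0 <;>
      simp [h0, Real.zero_rpow hs0, Real.zero_rpow (mul_ne_zero two_ne_zero hs0)]
  have hab0 : (0 : ℝ) < a d * b d := by exact_mod_cast Nat.pos_of_ne_zero h0
  have hle : ((a d : ℝ) * b d) ^ 2 ≤ ((a d ^ 2 * b d ^ 3 : ℕ) : ℝ) := by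
    have : (1 : ℝ) ≤ b d := by exact_mod_cast Nat.one_le_iff_ne_zero.mpr (right_ne_zero_of_mul h0)
    push_cast
    nlinarith [pow_pos hab0 2]
  rw [show 2 * s = ((2 : ℕ) : ℝ) * s by norm_num, Real.rpow_natCast_mul (by positivity)]
  exact inv_anti₀ (by positivity) (Real.rpow_le_rpow (by positivity) hle (by linarith))

theorem abs_div_rpow_le_powerfulRpowInv {g : ℕ → ℝ} (hg1 : ∀ n, |g n| ≤ 1)
    (hgP : ∀ n, g n ≠ 0 → IsPowerful n) (s : ℝ) (d : ℕ) :
    |g d| / (d : ℝ) ^ s ≤ powerfulRpowInv s d := by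
  by_cases hd : IsPowerful d
  · rw [powerfulRpowInv, Set.indicator_of_mem hd, ← one_div]
    exact div_le_div_of_nonneg_right (hg1 d) (by positivity)
  · rw [powerfulRpowInv, Set.indicator_of_notMem hd,
      show g d = 0 from by_contra fun h => hd (hgP d h)]
    simp

theorem sub_floor_le_rpow {x θ : ℝ} (hx : 0 ≤ x) (hθ0 : 0 ≤ θ) (hθ1 : θ ≤ 1) :
    x - ⌊x⌋₊ ≤ x ^ θ := by
  rcases lt_or_ge x 1 with h | h
  · rw [Nat.floor_eq_zero.mpr h, Nat.cast_zero, sub_zero]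
    exact Real.self_le_rpow_of_le_one hx h.le hθ1
  · linarith [Nat.lt_floor_add_one x, Real.one_le_rpow h hθ0]

theorem abs_sum_Ioc_mul_zeta_sub_le {g : ArithmeticFunction ℝ} {θ : ℝ} (hθ0 : 0 ≤ θ)
    (hθ1 : θ ≤ 1) (hg : Summable fun d : ℕ => |g d| / (d : ℝ) ^ θ) {N : ℝ} (hN : 0 ≤ N) :
    |∑ n ∈ Ioc 0 ⌊N⌋₊, (g * ζ) n - (∑' d : ℕ, g d / d) * N| ≤
      (∑' d : ℕ, |g d| / (d : ℝ) ^ θ) * N ^ θ := by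
  have hdiv : Summable fun d : ℕ => g d / d := by
    refine hg.of_norm_bounded fun d => ?_
    rcases eq_or_ne d 0 with rfl | hd
    · simp
    have hd1 : (1 : ℝ) ≤ d := by exact_mod_cast Nat.one_le_iff_ne_zero.mpr hd
    rw [Real.norm_eq_abs, abs_div, Nat.abs_cast]
    gcongr
    simpa using Real.rpow_le_rpow_of_exponent_le hd1 hθ1
  have hfloor : HasSum (fun d : ℕ => g d * ⌊N / d⌋₊) (∑ n ∈ Ioc 0 ⌊N⌋₊, (g * ζ) n) := by
    rw [sum_Ioc_mul_zeta_eq_sum]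
    simp_rw [Nat.floor_div_natCast]
    refine hasSum_sum_of_ne_finset_zero fun d hd => ?_
    rcases eq_or_ne d 0 with rfl | hd0
    · simp
    rw [Nat.div_eq_of_lt (by simp_all [Nat.pos_of_ne_zero hd0]), Nat.cast_zero, mul_zero]
  -- the error is `∑_d g(d) (N/d - ⌊N/d⌋)`, and `N/d - ⌊N/d⌋ ≤ (N/d)^θ`
  have hbound : ∀ d : ℕ, ‖g d / d * N - g d * ⌊N / d⌋₊‖ ≤ |g d| / (d : ℝ) ^ θ * N ^ θ := by
    intro d
    rcases eq_or_ne d 0 with rfl | hd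
    · simp
    have hfrac := sub_floor_le_rpow (div_nonneg hN d.cast_nonneg) hθ0 hθ1
    rw [Real.div_rpow hN d.cast_nonneg] at hfrac
    rw [Real.norm_eq_abs, div_mul_eq_mul_div, mul_div_assoc, ← mul_sub, abs_mul,
      abs_of_nonneg (sub_nonneg.mpr (Nat.floor_le (by positivity))), div_mul_eq_mul_div,
      mul_div_assoc]
    gcongr
  rw [abs_sub_comm, ← ((hdiv.hasSum.mul_right N).sub hfloor).tsum_eq]
  exact tsum_of_norm_bounded (hg.hasSum.mul_right _) hbound

theorem mul_moebius_apply_prime_pow_succ {R : Type*} [CommRing R] (f : ArithmeticFunction R)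
    {q : ℕ} (hq : q.Prime) (k : ℕ) : (f * μ) (q ^ (k + 1)) = f (q ^ (k + 1)) - f (q ^ k) := by
  have hsum (m : ℕ) : ∑ i ∈ range (m + 1), (f * μ) (q ^ i) = f (q ^ m) := by
    rw [← Nat.sum_divisors_prime_pow hq, ← coe_mul_zeta_apply, mul_assoc,
      coe_moebius_mul_coe_zeta, mul_one]
  rw [← hsum, ← hsum, sum_range_succ, add_sub_cancel_left]

theorem ArithmeticFunction.IsMultiplicative.abs_le_one {g : ArithmeticFunction ℝ}
    (hg : g.IsMultiplicative) (hpow : ∀ q k : ℕ, q.Prime → |g (q ^ k)| ≤ 1) (n : ℕ) :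
    |g n| ≤ 1 := by
  rcases eq_or_ne n 0 with rfl | hn
  · simp
  rw [hg.multiplicative_factorization g hn, Finsupp.prod, abs_prod]
  exact prod_le_one (fun _ _ => abs_nonneg _)
    fun q hq => hpow q _ (Nat.prime_of_mem_primeFactors hq)

theorem ArithmeticFunction.IsMultiplicative.isPowerful_of_apply_ne_zero {R : Type*}
    [CommMonoidWithZero R] {g : ArithmeticFunction R} (hg : g.IsMultiplicative)
    (hprime : ∀ q : ℕ, q.Prime → g q = 0) {n : ℕ} (hn : g n ≠ 0) : IsPowerful n := by
  intro q hq hqn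
  have hn0 : n ≠ 0 := by rintro rfl; simp at hn
  rw [hq.pow_dvd_iff_le_factorization hn0]
  by_contra! hlt
  have h1 : n.factorization q = 1 := by
    have := hq.factorization_pos_of_dvd hn0 hqn
    omega
  refine hn ?_
  rw [hg.multiplicative_factorization g hn0, Finsupp.prod]
  exact prod_eq_zero (Nat.support_factorization n ▸ Nat.mem_primeFactors.mpr ⟨hq, hqn, hn0⟩)
    (by rw [h1, pow_one, hprime q hq])

theorem tdiv_mul {m n : ℕ} (h : m.Coprime n) : tdiv (m * n) = tdiv m * tdiv n :=
  Nat.Coprime.card_divisors_mul h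

theorem tdiv_prime_pow {q : ℕ} (hq : q.Prime) (k : ℕ) : tdiv (q ^ k) = k + 1 := by
  rw [tdiv, ← sigma_zero_apply, sigma_zero_apply_prime_pow hq]

noncomputable def tdivNotDvd (p : ℕ) : ArithmeticFunction ℝ :=
  ⟨fun n => if p ∣ tdiv n then 0 else 1, by simp [tdiv]⟩

theorem tdivNotDvd_apply (p n : ℕ) : tdivNotDvd p n = if p ∣ tdiv n then 0 else 1 := rfl

theorem isMultiplicative_tdivNotDvd {p : ℕ} (hp : p.Prime) : (tdivNotDvd p).IsMultiplicative := by
  refine ⟨by simp [tdivNotDvd_apply, tdiv, hp.ne_one], fun {m n} h => ?_⟩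
  simp only [tdivNotDvd_apply, tdiv_mul h, hp.dvd_mul]
  split_ifs <;> simp_all

theorem isMultiplicative_tdivNotDvd_mul_moebius {p : ℕ} (hp : p.Prime) :
    (tdivNotDvd p * μ).IsMultiplicative :=
  (isMultiplicative_tdivNotDvd hp).mul isMultiplicative_moebius.intCast

theorem abs_tdivNotDvd_mul_moebius_le_one {p : ℕ} (hp : p.Prime) (n : ℕ) :
    |(tdivNotDvd p * μ) n| ≤ 1 := by
  refine (isMultiplicative_tdivNotDvd_mul_moebius hp).abs_le_one (fun q k hq => ?_) n
  rcases k with _ | k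
  · simp [(isMultiplicative_tdivNotDvd_mul_moebius hp).map_one]
  rw [mul_moebius_apply_prime_pow_succ _ hq, tdivNotDvd_apply, tdivNotDvd_apply]
  split_ifs <;> norm_num

theorem tdivNotDvd_mul_moebius_apply_prime {p q : ℕ} (hp : p.Prime) (hodd : Odd p)
    (hq : q.Prime) : (tdivNotDvd p * μ) q = 0 := by
  have h := mul_moebius_apply_prime_pow_succ (tdivNotDvd p) hq 0
  have hp2 : ¬p ∣ 2 := fun h2 => by
    rw [(Nat.prime_dvd_prime_iff_eq hp Nat.prime_two).mp h2] at hodd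
    exact Nat.not_odd_iff_even.mpr even_two hodd
  simp only [zero_add, pow_one, pow_zero] at h
  rw [h, tdivNotDvd_apply, tdivNotDvd_apply, ← pow_one q, tdiv_prime_pow hq]
  simp [tdiv, hp2, hp.ne_one]

theorem exists_abs_sum_tdivNotDvd_sub_le {p : ℕ} (hp : p.Prime) (hodd : Odd p) :
    ∃ c : ℝ, ∀ N : ℝ, 0 ≤ N → |∑ n ∈ Icc 1 ⌊N⌋₊, tdivNotDvd p n - c * N| ≤
      (∑' d, powerfulRpowInv (3 / 4) d) * N ^ (3 / 4 : ℝ) := by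
  set g := tdivNotDvd p * μ
  have hgψ : ∀ d : ℕ, |g d| / (d : ℝ) ^ (3 / 4 : ℝ) ≤ powerfulRpowInv (3 / 4) d :=
    abs_div_rpow_le_powerfulRpowInv (abs_tdivNotDvd_mul_moebius_le_one hp)
      (fun _ => (isMultiplicative_tdivNotDvd_mul_moebius hp).isPowerful_of_apply_ne_zero
        fun _ => tdivNotDvd_mul_moebius_apply_prime hp hodd) _
  have hψ := summable_powerfulRpowInv (s := 3 / 4) (by norm_num)
  have hg : Summable fun d : ℕ => |g d| / (d : ℝ) ^ (3 / 4 : ℝ) :=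
    hψ.of_nonneg_of_le (fun _ => by positivity) hgψ
  have hgζ : g * ζ = tdivNotDvd p := by
    rw [mul_assoc, coe_moebius_mul_coe_zeta, mul_one]
  refine ⟨∑' d : ℕ, g d / d, fun N hN => ?_⟩
  have hmain := abs_sum_Ioc_mul_zeta_sub_le (by norm_num) (by norm_num) hg hN
  rw [hgζ] at hmain
  exact hmain.trans (mul_le_mul_of_nonneg_right (hg.tsum_le_tsum hgψ hψ) (by positivity))

theorem card_filter_dvd_tdiv (p M : ℕ) :
    (#{n ∈ Icc 1 M | p ∣ tdiv n} : ℝ) = M - ∑ n ∈ Icc 1 M, tdivNotDvd p n := by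
  have hsplit := card_filter_add_card_filter_not (s := Icc 1 M) (p ∣ tdiv ·)
  simp only [tdivNotDvd_apply, sum_ite, sum_const_zero, sum_const, nsmul_one, zero_add,
    Nat.card_Icc, add_tsub_cancel_right] at hsplit ⊢
  rw [eq_sub_iff_add_eq]
  exact_mod_cast hsplit

theorem rpow_three_quarters_le_div_log {N : ℝ} (hN : 1 < N) :
    N ^ (3 / 4 : ℝ) ≤ 4 * N / Real.log N := by
  have hlog := Real.log_le_rpow_div (by linarith : 0 ≤ N) (by norm_num : (0 : ℝ) < 1 / 4)
  rw [le_div_iff₀ (Real.log_pos hN)]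
  calc N ^ (3 / 4 : ℝ) * Real.log N ≤ N ^ (3 / 4 : ℝ) * (N ^ (1 / 4 : ℝ) / (1 / 4)) := by gcongr
    _ = 4 * N := by
      rw [mul_div_assoc', ← Real.rpow_add (by linarith)]
      norm_num
      ring

theorem stmt16 :
    ∃ C : ℝ, 0 < C ∧ ∀ p : ℕ, p.Prime → Odd p → ∃ c : ℝ, ∀ N : ℝ, 2 ≤ N →
      |(((Finset.Icc 1 ⌊N⌋₊).filter (fun n => p ∣ tdiv n)).card : ℝ) - c * N| ≤
        C * N / Real.log N := by
  set K := ∑' d, powerfulRpowInv (3 / 4) d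
  have hK : 0 ≤ K := tsum_nonneg (powerfulRpowInv_nonneg _)
  refine ⟨4 * (1 + K), by positivity, fun p hp hodd => ?_⟩
  obtain ⟨c, hc⟩ := exists_abs_sum_tdivNotDvd_sub_le hp hodd
  refine ⟨1 - c, fun N hN => ?_⟩
  have hfloor : |(⌊N⌋₊ : ℝ) - N| ≤ 1 := by
    rw [abs_sub_comm, abs_of_nonneg (sub_nonneg.mpr (Nat.floor_le (by linarith)))]
    linarith [Nat.lt_floor_add_one N]
  have hN1 : 1 ≤ N ^ (3 / 4 : ℝ) := Real.one_le_rpow (by linarith) (by norm_num)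
  calc |(#{n ∈ Icc 1 ⌊N⌋₊ | p ∣ tdiv n} : ℝ) - (1 - c) * N|
      = |((⌊N⌋₊ : ℝ) - N) - (∑ n ∈ Icc 1 ⌊N⌋₊, tdivNotDvd p n - c * N)| := by
        rw [card_filter_dvd_tdiv]; ring_nf
    _ ≤ 1 + K * N ^ (3 / 4 : ℝ) := by grw [abs_sub, hfloor, hc N (by linarith)]
    _ ≤ (1 + K) * (4 * N / Real.log N) := by
        grw [← rpow_three_quarters_le_div_log (by linarith)]
        nlinarith
    _ = 4 * (1 + K) * N / Real.log N := by ring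
end
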